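/- Let N ≥ 2 and α ∈ (0,1). Then lim_{R→0⁺} ν(R) = −4 ∫_{ℝ^{N-1}} (|t|² + 4)^{−(N+α)/2} dt, and this limit is finite and strictly negative. -/

import Mathlib

open MeasureTheory Real Filter Topology

noncomputable section

abbrev ES (m : ℕ) : Type := EuclideanSpace ℝ (Fin (m + 1))

/-- The eigenvalue function
`ν(R) = 2R^{1+α} (∫ (1-cos t₁)/|t|^{N+α} dt - ∫ (1+cos t₁)/(|t|²+4R²)^{(N+α)/2} dt)`,
with `N = m + 2`. -/
def nu (m : ℕ) (α : ℝ) (R : ℝ) : ℝ :=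
  2 * R ^ (1 + α) *
    ((∫ t : ES m, (1 - Real.cos (t 0)) / ‖t‖ ^ ((m : ℝ) + 2 + α)) -
      ∫ t : ES m, (1 + Real.cos (t 0)) / (‖t‖ ^ 2 + 4 * R ^ 2) ^ (((m : ℝ) + 2 + α) / 2))

/-!
Substituting `t = R s` turns `2 R^{1+α} ∫ (1 + cos t₁) / (|t|² + 4R²)^{(N+α)/2} dt` into
`2 ∫ (1 + cos (R s₁)) (|s|² + 4)^{-(N+α)/2} ds`: the Jacobian `R^{N-1}` and the factor
`R^{-(N+α)}` pulled out of the denominator cancel `R^{1+α}` exactly. By dominated convergence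
this tends to `4 ∫ (|s|² + 4)^{-(N+α)/2} ds`, whereas the first term of `ν(R)` is a fixed
number times `R^{1+α} → 0`.
-/

open Module

section NormedSpace

variable {E : Type*} [NormedAddCommGroup E]

theorem continuous_rpow_norm_sq_add {c : ℝ} (hc : 0 < c) (p : ℝ) :
    Continuous fun x : E ↦ (‖x‖ ^ 2 + c) ^ p :=
  (by fun_prop : Continuous fun x : E ↦ ‖x‖ ^ 2 + c).rpow_const fun x ↦ Or.inl (by positivity)

variable [NormedSpace ℝ E] [FiniteDimensional ℝ E] [MeasurableSpace E] [BorelSpace E]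
  {μ : Measure E} [μ.IsAddHaarMeasure]

theorem integrable_rpow_neg_norm_sq_add {p c : ℝ} (hp : (finrank ℝ E : ℝ) < 2 * p)
    (hc : 0 < c) : Integrable (fun x : E ↦ (‖x‖ ^ 2 + c) ^ (-p)) μ := by
  set k := min c 1
  have hk : 0 < k := lt_min hc one_pos
  have hp0 : 0 ≤ p := by linarith [(finrank ℝ E).cast_nonneg (α := ℝ)]
  refine ((integrable_rpow_neg_one_add_norm_sq (μ := μ) hp).const_mul (k ^ (-p))).mono'
    (continuous_rpow_norm_sq_add hc (-p)).aestronglyMeasurable (ae_of_all _ fun x ↦ ?_)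
  have hle : k * (1 + ‖x‖ ^ 2) ≤ ‖x‖ ^ 2 + c := by
    nlinarith [min_le_left c 1, min_le_right c 1, sq_nonneg ‖x‖]
  rw [norm_of_nonneg (by positivity), neg_div, mul_div_cancel_left₀ p two_ne_zero,
    ← mul_rpow hk.le (by positivity)]
  exact rpow_le_rpow_of_nonpos (by positivity) hle (neg_nonpos.2 hp0)

theorem integral_rpow_neg_norm_sq_add_pos {p c : ℝ} (hp : (finrank ℝ E : ℝ) < 2 * p)
    (hc : 0 < c) : 0 < ∫ x : E, (‖x‖ ^ 2 + c) ^ (-p) ∂μ :=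
  integral_pos_of_integrable_nonneg_nonzero (x := 0) (continuous_rpow_norm_sq_add hc (-p))
    (integrable_rpow_neg_norm_sq_add hp hc) (fun x ↦ by positivity) (by positivity)

theorem integral_div_norm_sq_add_mul_sq_rpow (g : E → ℝ) {R c : ℝ} (hR : 0 < R)
    (hc : 0 ≤ c) (p : ℝ) :
    ∫ x, g x / (‖x‖ ^ 2 + c * R ^ 2) ^ p ∂μ =
      R ^ ((finrank ℝ E : ℝ) - 2 * p) * ∫ x, g (R • x) / (‖x‖ ^ 2 + c) ^ p ∂μ := by
  have hpt : ∀ x : E, g (R • x) / (‖x‖ ^ 2 + c) ^ p =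
      R ^ (2 * p) * (g (R • x) / (‖R • x‖ ^ 2 + c * R ^ 2) ^ p) := by
    intro x
    have hsq : (R ^ 2) ^ p = R ^ (2 * p) := by
      rw [← rpow_natCast, ← rpow_mul hR.le, Nat.cast_ofNat]
    rw [norm_smul, norm_of_nonneg hR.le,
      show (R * ‖x‖) ^ 2 + c * R ^ 2 = R ^ 2 * (‖x‖ ^ 2 + c) by ring,
      mul_rpow (by positivity) (by positivity), hsq]
    field_simp
  simp_rw [hpt]
  rw [integral_const_mul, Measure.integral_comp_smul μ (fun x ↦ g x / (‖x‖ ^ 2 + c * R ^ 2) ^ p) R,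
    abs_of_nonneg (by positivity), smul_eq_mul, ← mul_assoc, ← mul_assoc, ← rpow_add hR,
    sub_add_cancel, rpow_natCast, mul_inv_cancel₀ (by positivity), one_mul]

end NormedSpace

theorem tendsto_integral_one_add_cos_mul_mul {α : Type*} [MeasurableSpace α] {μ : Measure α}
    {φ g : α → ℝ} (hφ : Measurable φ) (hg : Integrable g μ) :
    Tendsto (fun R ↦ ∫ x, (1 + cos (R * φ x)) * g x ∂μ) (𝓝 0) (𝓝 (2 * ∫ x, g x ∂μ)) := by
  rw [← integral_const_mul]
  refine tendsto_integral_filter_of_dominated_convergence (fun x ↦ 2 * ‖g x‖)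
    (Eventually.of_forall fun R ↦ ?_) (Eventually.of_forall fun R ↦ ?_) (hg.norm.const_mul 2)
    (ae_of_all _ fun x ↦ ?_)
  · exact ((by fun_prop : Measurable fun x ↦ 1 + cos (R * φ x))).aestronglyMeasurable.mul
      hg.aestronglyMeasurable
  · refine ae_of_all _ fun x ↦ ?_
    rw [norm_mul, norm_of_nonneg (by linarith [neg_one_le_cos (R * φ x)])]
    gcongr
    linarith [cos_le_one (R * φ x)]
  · have : Tendsto (fun R : ℝ ↦ (1 + cos (R * φ x)) * g x) (𝓝 0)
        (𝓝 ((1 + cos (0 * φ x)) * g x)) := (by fun_prop : Continuous _).tendsto 0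
    simpa [one_add_one_eq_two] using this

theorem nu_eq_of_pos (m : ℕ) (α : ℝ) {R : ℝ} (hR : 0 < R) :
    nu m α R = 2 * R ^ (1 + α) * (∫ t : ES m, (1 - cos (t 0)) / ‖t‖ ^ ((m : ℝ) + 2 + α)) -
      2 * ∫ s : ES m, (1 + cos (R * s 0)) * (‖s‖ ^ 2 + 4) ^ (-(((m : ℝ) + 2 + α) / 2)) := by
  have hpow : R ^ (1 + α) * R ^ ((finrank ℝ (ES m) : ℝ) - 2 * (((m : ℝ) + 2 + α) / 2))
      = 1 := by
    rw [← rpow_add hR, finrank_euclideanSpace_fin]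
    push_cast
    rw [show 1 + α + ((m : ℝ) + 1 - 2 * (((m : ℝ) + 2 + α) / 2)) = 0 by ring, rpow_zero]
  have hintegrand : ∀ s : ES m,
      (1 + cos ((R • s) 0)) / (‖s‖ ^ 2 + 4) ^ (((m : ℝ) + 2 + α) / 2) =
        (1 + cos (R * s 0)) * (‖s‖ ^ 2 + 4) ^ (-(((m : ℝ) + 2 + α) / 2)) := by
    intro s
    rw [rpow_neg (by positivity), PiLp.smul_apply, smul_eq_mul, div_eq_mul_inv]
  rw [nu, mul_sub, integral_div_norm_sq_add_mul_sq_rpow _ hR (by norm_num),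
    ← mul_assoc _ (R ^ _), mul_assoc 2 (R ^ (1 + α)) (R ^ _), hpow, mul_one]
  simp_rw [hintegrand]

/-- `ν(R) → -4 ∫ (|t|²+4)^(-(N+α)/2) dt` as `R → 0⁺`, and this limit is
finite and strictly negative.  Here `N = m + 2 ≥ 2`. -/
theorem statement_10 (m : ℕ) (α : ℝ) (hα : α ∈ Set.Ioo (0 : ℝ) 1) :
    Integrable (fun t : ES m => (‖t‖ ^ 2 + 4) ^ (-(((m : ℝ) + 2 + α) / 2))) ∧
      Tendsto (nu m α) (𝓝[>] (0 : ℝ))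
        (𝓝 (-4 * ∫ t : ES m, (‖t‖ ^ 2 + 4) ^ (-(((m : ℝ) + 2 + α) / 2)))) ∧
      -4 * (∫ t : ES m, (‖t‖ ^ 2 + 4) ^ (-(((m : ℝ) + 2 + α) / 2))) < 0 := by
  have hdim : (finrank ℝ (ES m) : ℝ) < 2 * (((m : ℝ) + 2 + α) / 2) := by
    rw [finrank_euclideanSpace_fin]; push_cast; linarith [hα.1]
  have hint := integrable_rpow_neg_norm_sq_add (μ := volume) hdim (by norm_num : (0 : ℝ) < 4)
  have hpos := integral_rpow_neg_norm_sq_add_pos (μ := volume) hdim (by norm_num : (0 : ℝ) < 4)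
  refine ⟨hint, ?_, by linarith⟩
  have hvanish : Tendsto (fun R : ℝ ↦ R ^ (1 + α)) (𝓝 0) (𝓝 0) := by
    simpa [zero_rpow (by linarith [hα.1] : 1 + α ≠ 0)] using
      (continuous_rpow_const (by linarith [hα.1] : 0 ≤ 1 + α)).tendsto 0
  have hcos := tendsto_integral_one_add_cos_mul_mul
    (by fun_prop : Measurable fun s : ES m ↦ s 0) hint
  have hlim := ((hvanish.const_mul 2).mul_const
    (∫ t : ES m, (1 - cos (t 0)) / ‖t‖ ^ ((m : ℝ) + 2 + α))).sub (hcos.const_mul 2)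
  refine Tendsto.congr' (eventually_nhdsWithin_of_forall fun R hR ↦ (nu_eq_of_pos m α hR).symm) ?_
  convert hlim.mono_left nhdsWithin_le_nhds using 2
  ring
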